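/- In Br_n(A) (n ≥ 3), with u(a) = y_1^a (y_1^0)^{-1}, w(b) = y_2^b (y_2^0)^{-1}, and v(c) = y_2^0 y_1^c (y_1^0)^{-1} (y_2^0)^{-1}, one has u(a) w(b) = w(b) v(ab) u(a) for all a, b ∈ A (the Steinberg relation (St2) is preserved by ψ). -/
import Mathlib


/-- Relators of the parametrized braid group `Br_{n+1}(A)` of the introduction:
generators `y i a` for `i : Fin n` (representing `y_{i+1}^a`), `a : A`, with
relations (A1), (A1×A1), (A2). -/
def pRels (n : ℕ) (A : Type) [NonUnitalRing A] : Set (FreeGroup (Fin n × A)) :=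
  {r | (∃ (i : Fin n) (a b : A),
          r = FreeGroup.of (i, a) * FreeGroup.of (i, (0:A)) * FreeGroup.of (i, b) *
              (FreeGroup.of (i, (0:A)) * FreeGroup.of (i, (0:A)) * FreeGroup.of (i, a + b))⁻¹) ∨
       (∃ (i j : Fin n) (a b : A), (i : ℕ) + 2 ≤ (j : ℕ) ∧
          r = FreeGroup.of (i, a) * FreeGroup.of (j, b) *
              (FreeGroup.of (j, b) * FreeGroup.of (i, a))⁻¹) ∨
       (∃ (i j : Fin n) (a b c : A), (i : ℕ) + 1 = (j : ℕ) ∧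
          r = FreeGroup.of (i, a) * FreeGroup.of (j, b) * FreeGroup.of (i, c) *
              (FreeGroup.of (j, c) * FreeGroup.of (i, b + a * c) * FreeGroup.of (j, a))⁻¹)}

/-- The parametrized braid group `Br_{n+1}(A)`. -/
abbrev PBraid (n : ℕ) (A : Type) [NonUnitalRing A] := PresentedGroup (pRels n A)

/-- The generator `y_{i+1}^a` of the parametrized braid group. -/
def y {n : ℕ} {A : Type} [NonUnitalRing A] (i : Fin n) (a : A) : PBraid n A :=
  PresentedGroup.of (i, a)

/-- The relation (A2) holds in `PBraid n A`. -/
lemma relA2 {n : ℕ} {A : Type} [NonUnitalRing A] (i j : Fin n)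
    (hij : (i : ℕ) + 1 = (j : ℕ)) (a b c : A) :
    y i a * y j b * y i c = y j c * y i (b + a * c) * y j a := by
  have hmem : (FreeGroup.of (i, a) * FreeGroup.of (j, b) * FreeGroup.of (i, c) *
      (FreeGroup.of (j, c) * FreeGroup.of (i, b + a * c) * FreeGroup.of (j, a))⁻¹)
      ∈ pRels n A := Or.inr (Or.inr ⟨i, j, a, b, c, hij, rfl⟩)
  have h1 : PresentedGroup.mk (pRels n A)
      (FreeGroup.of (i, a) * FreeGroup.of (j, b) * FreeGroup.of (i, c) *
      (FreeGroup.of (j, c) * FreeGroup.of (i, b + a * c) * FreeGroup.of (j, a))⁻¹) = 1 := by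
    change (QuotientGroup.mk _ : PresentedGroup (pRels n A)) = 1
    rw [QuotientGroup.eq_one_iff]
    exact Subgroup.subset_normalClosure hmem
  simp only [map_mul, map_inv] at h1
  have h2 := mul_inv_eq_one.mp h1
  exact h2

/-- In `Br_n(A)` (n ≥ 3 strands), with
`u a = y_1^a (y_1^0)⁻¹`, `w b = y_2^b (y_2^0)⁻¹` and
`v c = y_2^0 y_1^c (y_1^0)⁻¹ (y_2^0)⁻¹`, one has
`u a * w b = w b * v (a*b) * u a` for all `a, b ∈ A`. -/
theorem stmt13 (n : ℕ) (hn : 2 ≤ n) (A : Type) [NonUnitalRing A] (a b : A) :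
    let y1 : A → PBraid n A := fun c => y (⟨0, by omega⟩ : Fin n) c
    let y2 : A → PBraid n A := fun c => y (⟨1, by omega⟩ : Fin n) c
    let u : A → PBraid n A := fun c => y1 c * (y1 0)⁻¹
    let w : A → PBraid n A := fun c => y2 c * (y2 0)⁻¹
    let v : A → PBraid n A := fun c => y2 0 * y1 c * (y1 0)⁻¹ * (y2 0)⁻¹
    u a * w b = w b * v (a * b) * u a := by
  intro y1 y2 u w v
  have rel : ∀ p q r : A, y1 p * y2 q * y1 r = y2 r * y1 (q + p * r) * y2 p := by
    intro p q r
    exact relA2 (⟨0, by omega⟩ : Fin n) (⟨1, by omega⟩ : Fin n) rfl p q r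
  have h1 : y1 0 * y2 0 * y1 b = y2 b * y1 0 * y2 0 := by
    have := rel 0 0 b; rwa [zero_mul, add_zero] at this
  have h2 : y1 a * y2 0 * y1 b = y2 b * y1 (a * b) * y2 a := by
    have := rel a 0 b; rwa [zero_add] at this
  have h3 : y1 a * y2 0 * y1 0 = y2 0 * y1 0 * y2 a := by
    have := rel a 0 0; rwa [mul_zero, add_zero] at this
  have h4 : y1 0 * y2 0 * y1 0 = y2 0 * y1 0 * y2 0 := by
    have := rel 0 0 0; rwa [mul_zero, add_zero] at this
  have e1 : (y1 0)⁻¹ * y2 b = y2 0 * y1 b * (y2 0)⁻¹ * (y1 0)⁻¹ := by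
    calc (y1 0)⁻¹ * y2 b
        = (y1 0)⁻¹ * (y2 b * y1 0 * y2 0) * (y2 0)⁻¹ * (y1 0)⁻¹ := by group
      _ = (y1 0)⁻¹ * (y1 0 * y2 0 * y1 b) * (y2 0)⁻¹ * (y1 0)⁻¹ := by rw [h1]
      _ = y2 0 * y1 b * (y2 0)⁻¹ * (y1 0)⁻¹ := by group
  have e2 : y2 a * (y2 0)⁻¹ * (y1 0)⁻¹ * (y2 0)⁻¹
      = (y1 0)⁻¹ * (y2 0)⁻¹ * y1 a * (y1 0)⁻¹ := by
    calc y2 a * (y2 0)⁻¹ * (y1 0)⁻¹ * (y2 0)⁻¹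
        = (y1 0)⁻¹ * (y2 0)⁻¹ * (y2 0 * y1 0 * y2 a) * (y2 0 * y1 0 * y2 0)⁻¹ := by group
      _ = (y1 0)⁻¹ * (y2 0)⁻¹ * (y1 a * y2 0 * y1 0) * (y1 0 * y2 0 * y1 0)⁻¹ := by
          rw [← h3, ← h4]
      _ = (y1 0)⁻¹ * (y2 0)⁻¹ * y1 a * (y1 0)⁻¹ := by group
  show y1 a * (y1 0)⁻¹ * (y2 b * (y2 0)⁻¹)
      = y2 b * (y2 0)⁻¹ * (y2 0 * y1 (a * b) * (y1 0)⁻¹ * (y2 0)⁻¹) * (y1 a * (y1 0)⁻¹)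
  calc y1 a * (y1 0)⁻¹ * (y2 b * (y2 0)⁻¹)
      = y1 a * ((y1 0)⁻¹ * y2 b) * (y2 0)⁻¹ := by group
    _ = y1 a * (y2 0 * y1 b * (y2 0)⁻¹ * (y1 0)⁻¹) * (y2 0)⁻¹ := by rw [e1]
    _ = (y1 a * y2 0 * y1 b) * ((y2 0)⁻¹ * (y1 0)⁻¹ * (y2 0)⁻¹) := by group
    _ = (y2 b * y1 (a * b) * y2 a) * ((y2 0)⁻¹ * (y1 0)⁻¹ * (y2 0)⁻¹) := by rw [h2]
    _ = y2 b * y1 (a * b) * (y2 a * (y2 0)⁻¹ * (y1 0)⁻¹ * (y2 0)⁻¹) := by group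
    _ = y2 b * y1 (a * b) * ((y1 0)⁻¹ * (y2 0)⁻¹ * y1 a * (y1 0)⁻¹) := by rw [e2]
    _ = y2 b * (y2 0)⁻¹ * (y2 0 * y1 (a * b) * (y1 0)⁻¹ * (y2 0)⁻¹) * (y1 a * (y1 0)⁻¹) := by
        group
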